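/- arXiv:2603.03909 — 2 statements merged into one kernel-verified Lean document; each statement's English description precedes it below -/
import Mathlib

section
/- In a rooted directed biedged graph satisfying the traversal rules, a snarl whose two frontier vertices are both left nodes, or both right nodes, cannot be an ultrabubble: its separated subgraph, if acyclic, necessarily contains a tip. -/
/-- A directed biedged graph satisfying the traversal rules: vertices are
partitioned into left nodes and right nodes; each vertex `v` has a unique
black-edge partner `partner v` on the other side; black edges are directed from
a left node to its right partner; grey edges are directed from right nodes to
left nodes. -/
structure Biedged (V : Type) where
  isLeft : V → Prop
  partner : V → V
  grey : V → V → Prop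
  partner_invol : ∀ v, partner (partner v) = v
  partner_flip : ∀ v, isLeft (partner v) ↔ ¬ isLeft v
  grey_dir : ∀ u v, grey u v → ¬ isLeft u ∧ isLeft v

/-- The black edges: from a left node to its partner. -/
def Biedged.black {V : Type} (G : Biedged V) (u v : V) : Prop :=
  G.isLeft u ∧ v = G.partner u

/-- The directed edge relation of the biedged graph. -/
def Biedged.E {V : Type} (G : Biedged V) (u v : V) : Prop :=
  G.black u v ∨ G.grey u v

/-- `walkN E n u v`: there is a directed walk of length `n` from `u` to `v`. -/
def walkN {V : Type} (E : V → V → Prop) : ℕ → V → V → Prop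
  | 0, u, v => u = v
  | n+1, u, v => ∃ w, E u w ∧ walkN E n w v

/-- Shortest-path distance: the length of a shortest directed walk. -/
noncomputable def gdist {V : Type} (E : V → V → Prop) (u v : V) : ℕ :=
  sInf {n | walkN E n u v}

/-- The edge relation obtained from the biedged graph by deleting the two black
edges incident to the snarl frontier vertices `x` and `y`. -/
def snarlE' {V : Type} (G : Biedged V) (x y : V) (u v : V) : Prop :=
  G.E u v ∧ ¬(u = x ∧ v = G.partner x) ∧ ¬(u = G.partner x ∧ v = x) ∧
    ¬(u = y ∧ v = G.partner y) ∧ ¬(u = G.partner y ∧ v = y)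

/-! Reversing every edge exchanges left and right nodes, so we may assume both frontiers are left
nodes. Then neither frontier has an outgoing edge inside `X`, so a source `t` of the acyclic
graph on `X` cannot be a frontier: it would be isolated, while `X` is connected and contains
both. Every edge of `G` into a vertex of `X` other than the frontiers is an edge of `X`, so `t`
has no incoming edge at all. Hence `t` is a left node (a right node is entered by its black
edge), and a left node with no incoming grey edge has no grey edge at all. -/

theorem Relation.ReflTransGen.eq_iff_of_isolated {α : Type} {r : α → α → Prop} {z a b : α}
    (hin : ∀ u, ¬ r u z) (hout : ∀ u, ¬ r z u)
    (h : Relation.ReflTransGen (fun a b => r a b ∨ r b a) a b) : a = z ↔ b = z := by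
  induction h with
  | refl => rfl
  | @tail c d _ hcd ih =>
    have hc : c ≠ z := by rintro rfl; rcases hcd with h | h <;> [exact hout d h; exact hin d h]
    have hd : d ≠ z := by rintro rfl; rcases hcd with h | h <;> [exact hin c h; exact hout c h]
    simpa [hc, hd] using ih

theorem exists_mem_forall_not_rel_of_acyclic {α : Type} [Finite α] {r : α → α → Prop}
    {X : Set α} (hX : X.Nonempty) (hpred : ∀ u v, r u v → v ∈ X → u ∈ X)
    (hacyc : ∀ v ∈ X, ¬ Relation.TransGen r v v) : ∃ t ∈ X, ∀ u, ¬ r u t := by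
  let s : α → α → Prop := fun a b => Relation.TransGen r a b ∧ b ∈ X
  have : IsTrans α s := ⟨fun _ _ _ hab hbc => ⟨hab.1.trans hbc.1, hbc.2⟩⟩
  have : Std.Irrefl s := ⟨fun a ha => hacyc a ha.2 ha.1⟩
  obtain ⟨t, htX, hmin⟩ := (Finite.wellFounded_of_trans_of_irrefl s).has_min X hX
  exact ⟨t, htX, fun u hu => hmin u (hpred u t hu htX) ⟨.single hu, htX⟩⟩

namespace Biedged

variable {V : Type} (G : Biedged V)

def reverse : Biedged V where
  isLeft v := ¬ G.isLeft v
  partner := G.partner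
  grey u v := G.grey v u
  partner_invol := G.partner_invol
  partner_flip v := by rw [G.partner_flip, not_not]
  grey_dir u v h := by rw [not_not]; exact (G.grey_dir v u h).symm

theorem reverse_E {u v : V} : G.reverse.E u v ↔ G.E v u := by
  have h : ¬ G.isLeft u ∧ v = G.partner u ↔ G.isLeft v ∧ u = G.partner v := by
    constructor
    · rintro ⟨hu, rfl⟩; exact ⟨(G.partner_flip u).mpr hu, (G.partner_invol u).symm⟩
    · rintro ⟨hv, rfl⟩
      exact ⟨by rw [G.partner_flip, not_not]; exact hv, (G.partner_invol v).symm⟩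
  exact or_congr h Iff.rfl

theorem snarlE'_reverse {x y u v : V} : snarlE' G.reverse x y u v ↔ snarlE' G x y v u := by
  unfold snarlE'
  rw [reverse_E]
  simp only [reverse]
  tauto

variable {G}

theorem snarlE'_comm {x y u v : V} : snarlE' G x y u v ↔ snarlE' G y x u v := by
  unfold snarlE'
  tauto

theorem not_snarlE'_of_isLeft {x y w : V} (hx : G.isLeft x) : ¬ snarlE' G x y x w := by
  rintro ⟨hb | hg, hpartner, -⟩
  · exact hpartner ⟨rfl, hb.2⟩
  · exact (G.grey_dir _ _ hg).1 hx

/-- The deleted black edges all end in a frontier vertex or a partner of one. -/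
theorem snarlE'_of_E {x y u v : V} (h : G.E u v) (hx : v ≠ x) (hy : v ≠ y)
    (hx' : v ≠ G.partner x) (hy' : v ≠ G.partner y) : snarlE' G x y u v :=
  ⟨h, fun h' => hx' h'.2, fun h' => hx h'.2, fun h' => hy' h'.2, fun h' => hy h'.2⟩

theorem isLeft_of_forall_not_E {t : V} (ht : ∀ u, ¬ G.E u t) : G.isLeft t := by
  by_contra hR
  exact ht (G.partner t) (Or.inl ⟨(G.partner_flip t).mpr hR, (G.partner_invol t).symm⟩)

theorem exists_tip_of_isLeft [Finite V] {x y : V} {X : Set V} (hxy : x ≠ y)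
    (hLx : G.isLeft x) (hLy : G.isLeft y) (hxX : x ∈ X) (hyX : y ∈ X)
    (hx'X : G.partner x ∉ X) (hy'X : G.partner y ∉ X)
    (hsep : ∀ u v : V, snarlE' G x y u v → (u ∈ X ↔ v ∈ X))
    (hconnX : ∀ u ∈ X,
      Relation.ReflTransGen (fun a b => snarlE' G x y a b ∨ snarlE' G x y b a) x u)
    (hacyc : ∀ v ∈ X, ¬ Relation.TransGen (snarlE' G x y) v v) :
    ∃ t ∈ X, t ≠ x ∧ t ≠ y ∧ (∀ u : V, ¬ G.grey u t) ∧ (∀ u : V, ¬ G.grey t u) := by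
  obtain ⟨t, htX, hsource⟩ := exists_mem_forall_not_rel_of_acyclic ⟨x, hxX⟩
    (fun u v huv hv => (hsep u v huv).mpr hv) hacyc
  have hxy_conn := hconnX y hyX
  have htx : t ≠ x := by
    rintro rfl
    exact hxy ((hxy_conn.eq_iff_of_isolated hsource fun _ => not_snarlE'_of_isLeft hLx).mp rfl).symm
  have hty : t ≠ y := by
    rintro rfl
    exact hxy ((hxy_conn.eq_iff_of_isolated hsource
      fun _ h => not_snarlE'_of_isLeft hLy (snarlE'_comm.mp h)).mpr rfl)
  have hnoE : ∀ u, ¬ G.E u t := fun u h => hsource u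
    (snarlE'_of_E h htx hty (ne_of_mem_of_not_mem htX hx'X) (ne_of_mem_of_not_mem htX hy'X))
  exact ⟨t, htX, htx, hty, fun u h => hnoE u (Or.inr h),
    fun u h => (G.grey_dir t u h).1 (isLeft_of_forall_not_E hnoE)⟩

end Biedged

theorem stmt_8_general {V : Type} [Fintype V] (G : Biedged V)
    (x y : V) (X : Set V)
    (hxy : x ≠ y)
    (hLLRR : (G.isLeft x ∧ G.isLeft y) ∨ (¬ G.isLeft x ∧ ¬ G.isLeft y))
    (hxX : x ∈ X) (hyX : y ∈ X)
    (hx'X : G.partner x ∉ X) (hy'X : G.partner y ∉ X)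
    (hsep : ∀ u v : V, snarlE' G x y u v → (u ∈ X ↔ v ∈ X))
    (hconnX : ∀ u ∈ X,
      Relation.ReflTransGen (fun a b => snarlE' G x y a b ∨ snarlE' G x y b a) x u)
    (hacyc : ∀ v ∈ X, ¬ Relation.TransGen (snarlE' G x y) v v) :
    ∃ t ∈ X, t ≠ x ∧ t ≠ y ∧ (∀ u : V, ¬ G.grey u t) ∧ (∀ u : V, ¬ G.grey t u) := by
  rcases hLLRR with ⟨hLx, hLy⟩ | ⟨hRx, hRy⟩
  · exact G.exists_tip_of_isLeft hxy hLx hLy hxX hyX hx'X hy'X hsep hconnX hacyc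
  · obtain ⟨t, htX, htx, hty, hin, hout⟩ := G.reverse.exists_tip_of_isLeft hxy hRx hRy hxX hyX
      hx'X hy'X (fun u v h => (hsep v u (G.snarlE'_reverse.mp h)).symm)
      (fun u hu => Relation.ReflTransGen.mono
        (fun a b h => by simpa only [G.snarlE'_reverse] using h.symm) _ _ (hconnX u hu))
      (fun v hv h => hacyc v hv (Relation.transGen_swap.mp
        (Relation.TransGen.mono (fun a b => G.snarlE'_reverse.mp) _ _ h)))
    exact ⟨t, htX, htx, hty, hout, hin⟩

/-- In a rooted directed biedged graph satisfying the traversal rules, a snarl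
whose two frontier vertices are both left nodes, or both right nodes, cannot be
an ultrabubble: its separated component `X`, if acyclic, necessarily contains a
tip (a vertex other than the frontiers with no incident grey edges). -/
theorem stmt_8 {V : Type} [Fintype V] (G : Biedged V) (root : V)
    (hrootL : G.isLeft root)
    (hroot_src : ∀ u : V, ¬ G.E u root)
    (hreach : ∀ v : V, ∃ n : ℕ, walkN G.E n root v)
    (x y : V) (X : Set V)
    (hxy : x ≠ y) (hblack_ne : G.partner x ≠ y)
    (hLLRR : (G.isLeft x ∧ G.isLeft y) ∨ (¬ G.isLeft x ∧ ¬ G.isLeft y))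
    (hxX : x ∈ X) (hyX : y ∈ X)
    (hx'X : G.partner x ∉ X) (hy'X : G.partner y ∉ X)
    (hsep : ∀ u v : V, snarlE' G x y u v → (u ∈ X ↔ v ∈ X))
    (hconnX : ∀ u ∈ X,
      Relation.ReflTransGen (fun a b => snarlE' G x y a b ∨ snarlE' G x y b a) x u)
    (hacyc : ∀ v ∈ X, ¬ Relation.TransGen (snarlE' G x y) v v) :
    ∃ t ∈ X, t ≠ x ∧ t ≠ y ∧ (∀ u : V, ¬ G.grey u t) ∧ (∀ u : V, ¬ G.grey t u) :=
  stmt_8_general G x y X hxy hLLRR hxX hyX hx'X hy'X hsep hconnX hacyc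
end

section
/- In a rooted directed biedged graph satisfying the traversal rules, if the frontier vertex of a snarl closest to the root is a left node, then the separated component of the snarl contains the root; hence such a snarl cannot be an ultrabubble. -/
/-! Follow a shortest walk from the root to `x` backwards. Every vertex on it other than `x`
is strictly closer to the root than `x`, hence than `y`, so none of its edges is one of the
two deleted black edges: the only candidates would start at `x` or `y`, enter `y`, or leave
the right node `partner x`, whose sole incoming edge is the black edge from `x`, so that it
lies farther from the root than `x`. -/

section Walks

variable {V : Type} {E : V → V → Prop} {root : V}

theorem walkN_succ_exists_last : ∀ {n : ℕ} {u v : V},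
    walkN E (n + 1) u v → ∃ w, walkN E n u w ∧ E w v
  | 0, u, _, ⟨_, huw, hwv⟩ => ⟨u, rfl, hwv ▸ huw⟩
  | _ + 1, _, _, ⟨a, hua, hav⟩ =>
    let ⟨w, haw, hwv⟩ := walkN_succ_exists_last hav
    ⟨w, ⟨a, hua, haw⟩, hwv⟩

theorem walkN_gdist {v : V} (h : ∃ n, walkN E n root v) : walkN E (gdist E root v) root v :=
  Nat.sInf_mem h

theorem gdist_le_of_walkN {v : V} {n : ℕ} (h : walkN E n root v) : gdist E root v ≤ n :=
  Nat.sInf_le h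

theorem exists_E_gdist_lt {v : V} (h : ∃ n, walkN E n root v) (hv : v ≠ root) :
    ∃ w, E w v ∧ gdist E root w < gdist E root v := by
  have hwalk := walkN_gdist h
  cases hk : gdist E root v with
  | zero => rw [hk] at hwalk; exact absurd hwalk.symm hv
  | succ k =>
    rw [hk] at hwalk
    obtain ⟨w, hw, hwv⟩ := walkN_succ_exists_last hwalk
    exact ⟨w, hwv, Nat.lt_succ_of_le (gdist_le_of_walkN hw)⟩

theorem reflTransGen_of_gdist_descent {P : V → Prop} {F : V → V → Prop}
    (hreach : ∀ v, ∃ n, walkN E n root v)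
    (hstep : ∀ w z, E w z → gdist E root w < gdist E root z → P z → P w ∧ F w z)
    (z : V) (hz : P z) : Relation.ReflTransGen F root z := by
  induction hk : gdist E root z using Nat.strong_induction_on generalizing z with
  | _ k ih =>
    by_cases hroot : z = root
    · exact hroot ▸ .refl
    obtain ⟨w, hwz, hlt⟩ := exists_E_gdist_lt (hreach z) hroot
    obtain ⟨hPw, hF⟩ := hstep w z hwz hlt hz
    exact (ih _ (hk ▸ hlt) w hPw rfl).tail hF

end Walks

namespace Biedged

variable {V : Type} (G : Biedged V)

theorem eq_partner_of_E_of_not_isLeft {w v : V} (hv : ¬ G.isLeft v) (h : G.E w v) :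
    w = G.partner v := by
  rcases h with ⟨-, rfl⟩ | hgrey
  · exact (G.partner_invol w).symm
  · exact absurd (G.grey_dir w v hgrey).2 hv

theorem gdist_lt_gdist_partner {root x : V} (hroot : G.isLeft root) (hx : G.isLeft x)
    (hreach : ∃ n, walkN G.E n root (G.partner x)) :
    gdist G.E root x < gdist G.E root (G.partner x) := by
  have hx' : ¬ G.isLeft (G.partner x) := (G.partner_flip x).not_left.mpr hx
  obtain ⟨w, hw, hlt⟩ := exists_E_gdist_lt hreach (fun h => hx' (h ▸ hroot))
  rwa [G.eq_partner_of_E_of_not_isLeft hx' hw, G.partner_invol] at hlt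

end Biedged

theorem stmt_9_general {V : Type} (G : Biedged V) (root : V)
    (hrootL : G.isLeft root)
    (hroot_src : ∀ u : V, ¬ G.E u root)
    (hreach : ∀ v : V, ∃ n : ℕ, walkN G.E n root v)
    (x y : V) (hxy : x ≠ y)
    (hxL : G.isLeft x)
    (hclosest : gdist G.E root x ≤ gdist G.E root y) :
    Relation.ReflTransGen (fun a b => snarlE' G x y a b ∨ snarlE' G x y b a) x root ∧
    (∀ u : V, ¬ G.grey u root) ∧ (∀ u : V, ¬ G.grey root u) := by
  refine ⟨?_, fun u hu => hroot_src u (Or.inr hu), fun u hu => (G.grey_dir _ _ hu).1 hrootL⟩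
  have hpartner : gdist G.E root x < gdist G.E root (G.partner x) :=
    G.gdist_lt_gdist_partner hrootL hxL (hreach _)
  have hconn : Relation.ReflTransGen (snarlE' G x y) root x := by
    refine reflTransGen_of_gdist_descent
      (P := fun z => gdist G.E root z < gdist G.E root x ∨ z = x) hreach ?_ x (Or.inr rfl)
    rintro w z hwz hlt hz
    have hzx : gdist G.E root z ≤ gdist G.E root x := by rcases hz with h | rfl <;> omega
    refine ⟨Or.inl (by omega), hwz, ?_, ?_, ?_, ?_⟩
    · rintro ⟨rfl, -⟩; omega
    · rintro ⟨rfl, -⟩; omega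
    · rintro ⟨rfl, -⟩; omega
    · rintro ⟨-, rfl⟩
      rcases hz with h | rfl
      · omega
      · exact hxy rfl
  exact Relation.ReflTransGen.mono (fun _ _ h => Or.inr h) _ _
    (Relation.ReflTransGen.swap _ _ hconn)

/-- In a rooted directed biedged graph satisfying the traversal rules, if the
frontier vertex of a snarl closest to the root is a left node, then the
separated component of the snarl (the component of `x` after deleting the two
black edges) contains the root; hence such a snarl cannot be an ultrabubble,
since the root is a tip (it has no incident grey edges). -/
theorem stmt_9 {V : Type} (G : Biedged V) (root : V)
    (hrootL : G.isLeft root)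
    (hroot_src : ∀ u : V, ¬ G.E u root)
    (hreach : ∀ v : V, ∃ n : ℕ, walkN G.E n root v)
    (x y : V) (hxy : x ≠ y) (hblack_ne : G.partner x ≠ y)
    (hxL : G.isLeft x)
    (hclosest : gdist G.E root x ≤ gdist G.E root y) :
    Relation.ReflTransGen (fun a b => snarlE' G x y a b ∨ snarlE' G x y b a) x root ∧
    (∀ u : V, ¬ G.grey u root) ∧ (∀ u : V, ¬ G.grey root u) :=
  stmt_9_general G root hrootL hroot_src hreach x y hxy hxL hclosest
end
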